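/- arXiv:1806.04837 — 2 statements merged into one kernel-verified Lean document; each statement's English description precedes it below -/
import Mathlib

section
/- For every n ≥ 1, the 𝒞-submodule Ĥ⁰ is invariant under the derivation ∂_n: for every w ∈ Ĥ⁰, ∂_n(w) ∈ Ĥ⁰. -/
noncomputable section

/-- The coefficient ring `𝒞 = ℚ[ℏ, ℏ⁻¹]`, realized as Laurent polynomials over `ℚ`. -/
abbrev CC : Type := LaurentPolynomial ℚ

/-- The variable `ℏ ∈ 𝒞`. -/
def hb : CC := LaurentPolynomial.T 1

/-- Embedding of rational constants into `𝒞`. -/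
def qs (x : ℚ) : CC := algebraMap ℚ CC x

/-- The non-commutative polynomial ring `H = 𝒞⟨a, b⟩`. -/
abbrev H : Type := FreeAlgebra CC (Fin 2)

/-- The generator `a`. -/
def av : H := FreeAlgebra.ι CC 0

/-- The generator `b`. -/
def bv : H := FreeAlgebra.ι CC 1

/-- `e k` for `k : ℕ`:  `e 0 = e_{1̄} = ab`, and `e (k+1) = e_{k+1} = a^k (a+ℏ) b`. -/
def ev : ℕ → H
  | 0 => av * bv
  | (k+1) => av ^ k * (av + algebraMap CC H hb) * bv

/-- The monomial `e_{k_1} ⋯ e_{k_r}` attached to an index (a list over `N̂`,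
with `0` encoding `1̄` and `k+1` encoding the positive integer `k+1`). -/
def eword (l : List ℕ) : H := (l.map ev).prod

/-- `Ĥ¹`, as the `𝒞`-span of all monomials `e_k` (this coincides with the subalgebra
freely generated by the `e_k`). -/
def H1 : Submodule CC H := Submodule.span CC {x : H | ∃ l : List ℕ, x = eword l}

/-- `Ĥ⁰`, the `𝒞`-span of monomials `e_k` with `k ∈ Î₀` (first entry `≠ 1`). -/
def H0 : Submodule CC H := Submodule.span CC
  {x : H | ∃ l : List ℕ, l.head? ≠ some 1 ∧ x = eword l}

/-- The circle product `∘_q` on the generators. -/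
def circ : ℕ → ℕ → H
  | 0, 0 => ev 2 - hb • ev 0
  | 0, (l+1) => ev (l+2)
  | (k+1), 0 => ev (k+2)
  | (k+1), (l+1) => ev (k+l+2) + hb • ev (k+l+1)

/-- The defining properties of the shuffle product `⧢_q` on `H`. -/
def IsShuffle (sh : H →ₗ[CC] H →ₗ[CC] H) : Prop :=
  (∀ w : H, sh 1 w = w) ∧ (∀ w : H, sh w 1 = w) ∧
  (∀ w w' : H, sh (av * w) (av * w') =
      av * (sh (av * w) w' + sh w (av * w') + hb • sh w w')) ∧
  (∀ w w' : H, sh (bv * w) w' = bv * sh w w') ∧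
  (∀ w w' : H, sh w (bv * w') = bv * sh w w')

/-- The defining properties of the stuffle product `*_q` on `Ĥ¹`. -/
def IsStuffle (st : H →ₗ[CC] H →ₗ[CC] H) : Prop :=
  (∀ w : H, st 1 w = w) ∧ (∀ w : H, st w 1 = w) ∧
  (∀ k l : ℕ, ∀ w w' : H, w ∈ H1 → w' ∈ H1 →
    st (ev k * w) (ev l * w') =
      ev k * st w (ev l * w') + ev l * st (ev k * w) w' + circ k l * st w w')

/-- The q-integer `[m] = (1-q^m)/(1-q)`. -/
def qint (q : ℂ) (m : ℕ) : ℂ := (1 - q ^ m) / (1 - q)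

/-- `F_k(m)`:  `F 0 = F_{1̄}` and `F (k+1) = F_{k+1}`. -/
def Fq (q : ℂ) : ℕ → ℕ → ℂ
  | 0, m => q ^ m / qint q m
  | (k+1), m => q ^ (k * m) / (qint q m) ^ (k + 1)

/-- `ζ_q(k)` for an index `k` (a list over `N̂`): the sum over `m_1 > ⋯ > m_r ≥ 1`. -/
def zetaq (q : ℂ) (l : List ℕ) : ℂ :=
  ∑' m : {f : Fin l.length → ℕ // StrictAnti f ∧ ∀ i, 0 < f i},
    ∏ i : Fin l.length, Fq q (l.get i) (m.1 i)

/-- The defining properties of the `𝒞`-linear map `Z_q` (as a map on all of `H`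
extending the one on `Ĥ⁰`): additive, `𝒞`-semilinear along `ρ`, sending `e_k ↦ ζ_q(k)`
for `k ∈ Î₀`. -/
def IsZq (ρ : CC →ₐ[ℚ] ℂ) (q : ℂ) (Z : H →+ ℂ) : Prop :=
  (∀ c : CC, ∀ w : H, Z (c • w) = ρ c * Z w) ∧
  (∀ l : List ℕ, l.head? ≠ some 1 → Z (eword l) = zetaq q l)


/-- The defining properties of the `𝒞`-linear derivation `∂_n` on `H`:
`∂_n(a) = ((−1)^n/n)·a·{a(b+1)+ℏb}^{n−1}(a+ℏ)b` and
`∂_n(b) = ((−1)^{n−1}/n)·a·{(b+1)a+ℏb}^{n−1}(b+1)b`. -/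
def IsPartial (n : ℕ) (p : H →ₗ[CC] H) : Prop :=
  (∀ u v : H, p (u * v) = p u * v + u * p v) ∧
  p av = qs ((-1 : ℚ) ^ n / (n : ℚ)) •
    (av * (av * (bv + 1) + hb • bv) ^ (n - 1) * (av + algebraMap CC H hb) * bv) ∧
  p bv = qs ((-1 : ℚ) ^ (n - 1) / (n : ℚ)) •
    (av * ((bv + 1) * av + hb • bv) ^ (n - 1) * (bv + 1) * bv)

section Aux

open Submodule LaurentPolynomial

lemma ev_zero : ev 0 = av * bv := rfl

lemma ev_succ (k : ℕ) : ev (k + 1) = av ^ k * (av + algebraMap CC H hb) * bv := rfl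

lemma eword_nil : eword [] = 1 := rfl

lemma eword_cons (k : ℕ) (l : List ℕ) : eword (k :: l) = ev k * eword l := by
  simp [eword]

lemma one_mem_H1 : (1 : H) ∈ H1 := subset_span ⟨[], rfl⟩

lemma eword_mem_H1 (l : List ℕ) : eword l ∈ H1 := subset_span ⟨l, rfl⟩

lemma H0_le_H1 : H0 ≤ H1 := span_mono (fun _x hx => by
  obtain ⟨l, _, h⟩ := hx; exact ⟨l, h⟩)

lemma mem_H1_iff {v : H} : v ∈ H1 ↔ v ∈ Submodule.span CC {x : H | ∃ l : List ℕ, x = eword l} :=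
  Iff.rfl

lemma mem_H0_iff {v : H} : v ∈ H0 ↔
    v ∈ Submodule.span CC {x : H | ∃ l : List ℕ, l.head? ≠ some 1 ∧ x = eword l} :=
  Iff.rfl

lemma ev_mul_mem_H1 (k : ℕ) {v : H} (hv : v ∈ H1) : ev k * v ∈ H1 := by
  rw [mem_H1_iff] at hv
  induction hv using Submodule.span_induction with
  | mem x hx =>
    obtain ⟨l, rfl⟩ := hx
    rw [← eword_cons]; exact eword_mem_H1 _
  | zero => rw [mul_zero]; exact zero_mem H1
  | add x y hx hy ihx ihy => rw [mul_add]; exact add_mem ihx ihy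
  | smul c x hx ih => rw [mul_smul_comm]; exact smul_mem _ _ ih

lemma ev_mul_mem_H0 {k : ℕ} (hk : k ≠ 1) {v : H} (hv : v ∈ H1) : ev k * v ∈ H0 := by
  rw [mem_H1_iff] at hv
  induction hv using Submodule.span_induction with
  | mem x hx =>
    obtain ⟨l, rfl⟩ := hx
    rw [← eword_cons]
    exact subset_span ⟨k :: l, by simpa using hk, rfl⟩
  | zero => rw [mul_zero]; exact zero_mem H0
  | add x y hx hy ihx ihy => rw [mul_add]; exact add_mem ihx ihy
  | smul c x hx ih => rw [mul_smul_comm]; exact smul_mem _ _ ih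

lemma ev_succ_eq (k : ℕ) : ev (k + 1) = av ^ (k + 1) * bv + hb • (av ^ k * bv) := by
  have h : av ^ k * (av + algebraMap CC H hb) * bv
      = av ^ (k + 1) * bv + algebraMap CC H hb * (av ^ k * bv) := by
    rw [mul_add, add_mul, ← pow_succ, ← Algebra.commutes hb (av ^ k), mul_assoc]
  rw [ev_succ, h, Algebra.smul_def]

lemma Tneg_mul_hb : LaurentPolynomial.T (-1) * hb = 1 := by
  rw [hb, ← LaurentPolynomial.T_add, neg_add_cancel, LaurentPolynomial.T_zero]

lemma hb_smul_bv : hb • bv = ev 1 - ev 0 := by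
  rw [ev_succ_eq 0, ev_zero, pow_one, pow_zero, one_mul]
  abel

lemma bv_mul_mem_H1 {v : H} (hv : v ∈ H1) : bv * v ∈ H1 := by
  have h : (LaurentPolynomial.T (-1) : CC) • ((ev 1 - ev 0) * v) = bv * v := by
    rw [← hb_smul_bv, smul_mul_assoc, smul_smul, Tneg_mul_hb, one_smul]
  rw [← h, sub_mul]
  exact smul_mem _ _ (sub_mem (ev_mul_mem_H1 1 hv) (ev_mul_mem_H1 0 hv))

lemma pow_mul_bv_mem_H0 (j : ℕ) {v : H} (hv : v ∈ H1) :
    av ^ (j + 1) * (bv * v) ∈ H0 := by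
  induction j with
  | zero =>
    rw [pow_one, ← mul_assoc, ← ev_zero]
    exact ev_mul_mem_H0 (by norm_num) hv
  | succ j ih =>
    have key : av ^ (j + 1 + 1) * (bv * v)
        = ev (j + 1 + 1) * v - hb • (av ^ (j + 1) * (bv * v)) := by
      rw [ev_succ_eq (j + 1), add_mul, smul_mul_assoc, mul_assoc, mul_assoc]
      abel
    rw [key]
    exact sub_mem (ev_mul_mem_H0 (by omega) hv) (smul_mem _ _ ih)

/-- Monomials (words in the two generators). -/
def mono (l : List (Fin 2)) : H := (l.map (FreeAlgebra.ι CC)).prod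

lemma mono_nil : mono [] = 1 := rfl

lemma mono_cons (i : Fin 2) (l : List (Fin 2)) :
    mono (i :: l) = FreeAlgebra.ι CC i * mono l := by simp [mono]

lemma mono_append (l l' : List (Fin 2)) : mono (l ++ l') = mono l * mono l' := by
  simp [mono]

lemma mem_span_mono (x : H) :
    x ∈ Submodule.span CC {y : H | ∃ l : List (Fin 2), y = mono l} := by
  induction x using FreeAlgebra.induction with
  | grade0 r =>
    have h : algebraMap CC H r = r • mono [] := by
      rw [mono_nil, Algebra.algebraMap_eq_smul_one]
    rw [h]; exact smul_mem _ _ (subset_span ⟨[], rfl⟩)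
  | grade1 i => exact subset_span ⟨[i], by rw [mono_cons, mono_nil, mul_one]⟩
  | add x y hx hy => exact add_mem hx hy
  | mul x y hx hy =>
    induction hx using Submodule.span_induction with
    | mem x hx =>
      obtain ⟨l, rfl⟩ := hx
      induction hy using Submodule.span_induction with
      | mem y hy =>
        obtain ⟨l', rfl⟩ := hy
        exact subset_span ⟨l ++ l', (mono_append l l').symm⟩
      | zero => rw [mul_zero]; exact zero_mem _
      | add y y' _ _ ih ih' => rw [mul_add]; exact add_mem ih ih'
      | smul c y _ ih => rw [mul_smul_comm]; exact smul_mem _ _ ih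
    | zero => rw [zero_mul]; exact zero_mem _
    | add x x' _ _ ih ih' => rw [add_mul]; exact add_mem ih ih'
    | smul c x _ ih => rw [smul_mul_assoc]; exact smul_mem _ _ ih

lemma mono_key (l : List (Fin 2)) {v : H} (hv : v ∈ H1) :
    mono l * (bv * v) ∈ H1 ∧ ∀ j : ℕ, av ^ (j + 1) * (mono l * (bv * v)) ∈ H0 := by
  induction l with
  | nil =>
    constructor
    · rw [mono_nil, one_mul]; exact bv_mul_mem_H1 hv
    · intro j; rw [mono_nil, one_mul]; exact pow_mul_bv_mem_H0 j hv
  | cons i l ih =>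
    have hi : FreeAlgebra.ι CC i = av ∨ FreeAlgebra.ι CC i = bv := by
      fin_cases i
      · exact Or.inl rfl
      · exact Or.inr rfl
    simp only [mono_cons, mul_assoc]
    rcases hi with h | h <;> simp only [h]
    · constructor
      · have h0 := ih.2 0
        norm_num at h0
        exact H0_le_H1 h0
      · intro j
        have h1 := ih.2 (j + 1)
        rw [pow_succ, mul_assoc] at h1
        exact h1
    · constructor
      · exact bv_mul_mem_H1 ih.1
      · intro j
        exact pow_mul_bv_mem_H0 j ih.1

lemma aXb_mul_mem_H0 (x : H) {v : H} (hv : v ∈ H1) : av * x * (bv * v) ∈ H0 := by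
  have hx := mem_span_mono x
  induction hx using Submodule.span_induction with
  | mem x hx =>
    obtain ⟨l, rfl⟩ := hx
    have h := (mono_key l hv).2 0
    rw [pow_one, ← mul_assoc] at h
    exact h
  | zero => rw [mul_zero, zero_mul]; exact zero_mem H0
  | add x y _ _ ihx ihy => rw [mul_add, add_mul]; exact add_mem ihx ihy
  | smul c x _ ih => rw [mul_smul_comm, smul_mul_assoc]; exact smul_mem _ _ ih

/-- The submodule `a·H·b`. -/
def AB : Submodule CC H where
  carrier := {w | ∃ x : H, w = av * x * bv}
  zero_mem' := ⟨0, by rw [mul_zero, zero_mul]⟩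
  add_mem' := by
    rintro w w' ⟨x, rfl⟩ ⟨y, rfl⟩
    exact ⟨x + y, by rw [mul_add, add_mul]⟩
  smul_mem' := by
    rintro c w ⟨x, rfl⟩
    exact ⟨c • x, by rw [mul_smul_comm, smul_mul_assoc]⟩

lemma mem_AB {w : H} : w ∈ AB ↔ ∃ x : H, w = av * x * bv := Iff.rfl

lemma AB_mul_a {w : H} (hw : w ∈ AB) : av * w ∈ AB := by
  obtain ⟨x, rfl⟩ := mem_AB.mp hw
  exact ⟨av * x, by rw [mul_assoc av (av * x) bv, mul_assoc av x bv]⟩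

lemma AB_mul_pow (k : ℕ) {w : H} (hw : w ∈ AB) : av ^ k * w ∈ AB := by
  induction k with
  | zero => rw [pow_zero, one_mul]; exact hw
  | succ k ih => rw [pow_succ', mul_assoc]; exact AB_mul_a ih

lemma AB_mul_C (c : CC) {w : H} (hw : w ∈ AB) : algebraMap CC H c * w ∈ AB := by
  rw [← Algebra.smul_def]; exact AB.smul_mem c hw

lemma AB_mul_mem_H0 {w : H} (hw : w ∈ AB) {v : H} (hv : v ∈ H1) : w * v ∈ H0 := by
  obtain ⟨x, rfl⟩ := mem_AB.mp hw
  rw [mul_assoc (av * x) bv v]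
  exact aXb_mul_mem_H0 x hv

/-- The submodule of `w` with `w·(y·b) ∈ a·H·b` for every `y`. -/
def AB' : Submodule CC H where
  carrier := {w | ∀ y : H, w * (y * bv) ∈ AB}
  zero_mem' := fun y => by rw [zero_mul]; exact AB.zero_mem
  add_mem' := fun ha hb y => by rw [add_mul]; exact AB.add_mem (ha y) (hb y)
  smul_mem' := fun c w hw y => by rw [smul_mul_assoc]; exact AB.smul_mem c (hw y)

lemma mem_AB' {w : H} : w ∈ AB' ↔ ∀ y : H, w * (y * bv) ∈ AB := Iff.rfl

lemma AB_le_AB' : AB ≤ AB' := by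
  intro w hw
  obtain ⟨x, rfl⟩ := mem_AB.mp hw
  rw [mem_AB']
  intro y
  exact ⟨x * (bv * y), by noncomm_ring⟩

lemma AB'_mul_right {w : H} (hw : w ∈ AB') (z : H) : w * z ∈ AB' := by
  rw [mem_AB']
  intro y
  have h := mem_AB'.mp hw (z * y)
  have e : w * (z * y * bv) = w * z * (y * bv) := by
    rw [mul_assoc w z (y * bv), mul_assoc z y bv]
  rwa [e] at h

lemma AB'_mul_a {w : H} (hw : w ∈ AB') : av * w ∈ AB' := by
  rw [mem_AB']
  intro y
  have h := AB_mul_a (mem_AB'.mp hw y)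
  rwa [← mul_assoc] at h

lemma AB'_mul_pow (k : ℕ) {w : H} (hw : w ∈ AB') : av ^ k * w ∈ AB' := by
  induction k with
  | zero => rw [pow_zero, one_mul]; exact hw
  | succ k ih => rw [pow_succ', mul_assoc]; exact AB'_mul_a ih

lemma AB'_mul_bv {w : H} (hw : w ∈ AB') : w * bv ∈ AB := by
  have h := mem_AB'.mp hw 1
  rwa [one_mul] at h

section Partial

variable {n : ℕ} {p : H →ₗ[CC] H}

lemma p_one (hp : IsPartial n p) : p 1 = 0 := by
  have h := hp.1 1 1
  rw [one_mul, mul_one, one_mul] at h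
  have h2 : p 1 + p 1 = p 1 + 0 := by rw [add_zero]; exact h.symm
  exact (add_left_cancel h2)

lemma p_algebraMap (hp : IsPartial n p) (c : CC) : p (algebraMap CC H c) = 0 := by
  rw [Algebra.algebraMap_eq_smul_one, map_smul, p_one hp, smul_zero]

lemma pa_mem (hp : IsPartial n p) : p av ∈ AB := by
  rw [hp.2.1]
  refine AB.smul_mem _ ?_
  exact ⟨(av * (bv + 1) + hb • bv) ^ (n - 1) * (av + algebraMap CC H hb),
    by rw [mul_assoc av ((av * (bv + 1) + hb • bv) ^ (n - 1)) (av + algebraMap CC H hb)]⟩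

lemma pb_mem (hp : IsPartial n p) : p bv ∈ AB := by
  rw [hp.2.2]
  refine AB.smul_mem _ ?_
  exact ⟨((bv + 1) * av + hb • bv) ^ (n - 1) * (bv + 1),
    by rw [mul_assoc av (((bv + 1) * av + hb • bv) ^ (n - 1)) (bv + 1)]⟩

lemma p_pow_mem (hp : IsPartial n p) (k : ℕ) : p (av ^ k) ∈ AB' := by
  induction k with
  | zero => rw [pow_zero, p_one hp]; exact AB'.zero_mem
  | succ k ih =>
    rw [pow_succ', hp.1]
    exact AB'.add_mem (AB'_mul_right (AB_le_AB' (pa_mem hp)) _) (AB'_mul_a ih)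

lemma p_ev_mem (hp : IsPartial n p) (k : ℕ) : p (ev k) ∈ AB := by
  cases k with
  | zero =>
    rw [ev_zero, hp.1]
    exact AB.add_mem (AB'_mul_bv (AB_le_AB' (pa_mem hp))) (AB_mul_a (pb_mem hp))
  | succ k =>
    rw [ev_succ, hp.1, hp.1, map_add, p_algebraMap hp, add_zero]
    refine AB.add_mem (AB'_mul_bv (AB'.add_mem ?_ ?_)) ?_
    · exact AB'_mul_right (p_pow_mem hp k) _
    · exact AB'_mul_pow k (AB_le_AB' (pa_mem hp))
    · rw [mul_assoc, add_mul]
      exact AB_mul_pow k (AB.add_mem (AB_mul_a (pb_mem hp)) (AB_mul_C hb (pb_mem hp)))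

lemma p_eword_mem_H1 (hp : IsPartial n p) (l : List ℕ) : p (eword l) ∈ H1 := by
  induction l with
  | nil => rw [eword_nil, p_one hp]; exact zero_mem H1
  | cons k l ih =>
    rw [eword_cons, hp.1]
    exact add_mem (H0_le_H1 (AB_mul_mem_H0 (p_ev_mem hp k) (eword_mem_H1 l)))
      (ev_mul_mem_H1 k ih)

lemma p_eword_mem_H0 (hp : IsPartial n p) (l : List ℕ) (hl : l.head? ≠ some 1) :
    p (eword l) ∈ H0 := by
  cases l with
  | nil => rw [eword_nil, p_one hp]; exact zero_mem H0
  | cons k l =>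
    have hk : k ≠ 1 := by simpa using hl
    rw [eword_cons, hp.1]
    exact add_mem (AB_mul_mem_H0 (p_ev_mem hp k) (eword_mem_H1 l))
      (ev_mul_mem_H0 hk (p_eword_mem_H1 hp l))

end Partial

end Aux

/-- For every `n ≥ 1`, `Ĥ⁰` is invariant under `∂_n`. -/
theorem H0_invariant_partial (n : ℕ) (hn : 1 ≤ n)
    (p : H →ₗ[CC] H) (hp : IsPartial n p)
    (w : H) (hw : w ∈ H0) :
    p w ∈ H0 := by
  rw [mem_H0_iff] at hw
  induction hw using Submodule.span_induction with
  | mem x hx =>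
    obtain ⟨l, hl, rfl⟩ := hx
    exact p_eword_mem_H0 hp l hl
  | zero => rw [map_zero]; exact zero_mem H0
  | add x y _ _ ihx ihy => rw [map_add]; exact add_mem ihx ihy
  | smul c x _ ih => rw [map_smul]; exact Submodule.smul_mem _ _ ih

end
end

section
/- Let n ≥ 1 and let ζ_n ∈ ℂ be a primitive n-th root of unity. Then for every integer r with 0 ≤ r ≤ n−1, Σ_{n>m_1>⋯>m_r≥1} Π_{j=1}^r (ζ_n^{m_j}/[m_j]) = ((−1)^r/n)·binom(n, r+1)·(1−ζ_n)^r, where [m] = (1−ζ_n^m)/(1−ζ_n). Equivalently, Π_{m=1}^{n−1} (1 + (ζ_n^m/[m])T) = (1 − (1 − (1−ζ_n)T)^n) / (n(1−ζ_n)T) as polynomials in T. -/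
noncomputable section

/-!
Put `u = 1 - (1 - ζ) T`. Since `(1 - ζ^m) / [m] = 1 - ζ`, each factor satisfies
`(1 - ζ^m) (1 + (ζ^m / [m]) T) = 1 - ζ^m u`, while `(1 - ζ) T = 1 - u` is the same expression for
`m = 0`. As `∏_{m=1}^{n-1} (1 - ζ^m) = n`, the polynomial identity becomes
`∏_{m=0}^{n-1} (1 - ζ^m u) = 1 - u^n`, the factorisation of `1 - Y^n` over the `n`-th roots of
unity.
The sum over decreasing tuples is the `r`-th elementary symmetric function of the `ζ^m / [m]`,
i.e. the coefficient of `T^r` in the product, and comparing coefficients of `T^(r+1)` gives the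
closed form.
-/

open Finset Polynomial

theorem Polynomial.coeff_prod_one_add_C_mul_X {ι R : Type*} [CommSemiring R] (s : Finset ι)
    (b : ι → R) (k : ℕ) :
    (∏ i ∈ s, (1 + C (b i) * X)).coeff k = ∑ t ∈ s.powersetCard k, ∏ i ∈ t, b i := by
  classical
  have hterm (t : Finset ι) : ∏ i ∈ t, C (b i) * X = C (∏ i ∈ t, b i) * X ^ #t := by
    rw [prod_mul_distrib, prod_const, map_prod]
  simp_rw [prod_one_add, hterm, finsetSum_coeff, coeff_C_mul_X_pow, powersetCard_eq_filter,
    sum_filter, eq_comm (a := k)]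

theorem Polynomial.coeff_one_add_C_mul_X_pow {R : Type*} [CommSemiring R] (a : R) (n k : ℕ) :
    ((1 + C a * X) ^ n).coeff k = n.choose k * a ^ k := by
  have h := coeff_prod_one_add_C_mul_X (range n) (fun _ => a) k
  rw [prod_const, card_range] at h
  rw [h, sum_congr rfl fun t ht => by rw [prod_const, (mem_powersetCard.1 ht).2],
    sum_const, card_powersetCard, card_range, nsmul_eq_mul]

theorem IsPrimitiveRoot.prod_one_sub_pow_mul {R : Type*} [CommRing R] [IsDomain R] {ζ : R}
    {n : ℕ} (hζ : IsPrimitiveRoot ζ n) (hn : 0 < n) (y : R) :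
    ∏ i ∈ range n, (1 - ζ ^ i * y) = 1 - y ^ n := by
  simpa [eval_prod] using (congrArg (eval 1) (X_pow_sub_C_eq_prod hζ hn (rfl : y ^ n = y ^ n))).symm

theorem IsPrimitiveRoot.prod_Ico_one_sub_pow {R : Type*} [CommRing R] [IsDomain R] {ζ : R}
    {n : ℕ} (hζ : IsPrimitiveRoot ζ n) (hn : 0 < n) : ∏ k ∈ Ico 1 n, (1 - ζ ^ k) = n := by
  obtain ⟨n, rfl⟩ := Nat.exists_eq_add_one_of_ne_zero hn.ne'
  rw [prod_Ico_eq_prod_range, Nat.add_sub_cancel, Nat.cast_add_one]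
  simpa only [add_comm 1] using hζ.prod_one_sub_pow_eq_order

open Classical in
theorem Finset.sum_strictAnti_eq_sum_powersetCard {α M : Type*} [LinearOrder α] [Fintype α]
    [CommSemiring M] (s : Finset α) (r : ℕ) (g : α → M) :
    ∑ f : Fin r → α, (if StrictAnti f ∧ ∀ i, f i ∈ s then ∏ i, g (f i) else 0) =
      ∑ t ∈ s.powersetCard r, ∏ x ∈ t, g x := by
  rw [← sum_filter]
  refine sum_bij' (fun f _ => univ.image f)
    (fun t ht i => t.orderEmbOfFin (mem_powersetCard.1 ht).2 i.rev) ?_ ?_ ?_ ?_ ?_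
  · intro f hf
    obtain ⟨hanti, hs⟩ := (mem_filter.1 hf).2
    rw [mem_powersetCard, card_image_of_injective _ hanti.injective, card_univ, Fintype.card_fin]
    exact ⟨by simpa [subset_iff] using hs, rfl⟩
  · intro t ht
    obtain ⟨hts, hcard⟩ := mem_powersetCard.1 ht
    refine mem_filter.2 ⟨mem_univ _, fun i j hij => ?_, fun i => hts (orderEmbOfFin_mem _ _ _)⟩
    exact (t.orderEmbOfFin hcard).strictMono (Fin.rev_lt_rev.2 hij)
  · intro f hf
    have hanti := (mem_filter.1 hf).2.1
    have hcard : #(univ.image f) = r := by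
      rw [card_image_of_injective _ hanti.injective, card_univ, Fintype.card_fin]
    have h := orderEmbOfFin_unique hcard (f := f ∘ Fin.rev)
      (fun i => mem_image_of_mem _ (mem_univ _)) (hanti.comp Fin.rev_strictAnti)
    funext i
    simpa using (congrFun h i.rev).symm
  · intro t ht
    have h := image_image (s := univ) (f := Fin.rev)
      (g := t.orderEmbOfFin (mem_powersetCard.1 ht).2)
    rw [image_univ_of_surjective Fin.rev_surjective, image_orderEmbOfFin_univ] at h
    exact h.symm
  · intro f hf
    rw [prod_image fun i _ j _ h => (mem_filter.1 hf).2.1.injective h]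

open Classical in
theorem sum_strictAnti_pos_eq_sum_powersetCard_Icc {M : Type*} [CommSemiring M] (n r : ℕ)
    (g : ℕ → M) :
    ∑ f : Fin r → Fin n,
        (if (StrictAnti fun i => (f i : ℕ)) ∧ ∀ i, 0 < (f i : ℕ) then ∏ i, g (f i) else 0) =
      ∑ t ∈ (Icc 1 (n - 1)).powersetCard r, ∏ m ∈ t, g m := by
  have hIcc :
      Icc 1 (n - 1) = ({x : Fin n | 0 < (x : ℕ)} : Finset (Fin n)).map Fin.valEmbedding := by
    ext m
    simp only [mem_Icc, mem_map, mem_filter_univ, Fin.valEmbedding_apply]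
    exact ⟨fun h => ⟨⟨m, by omega⟩, h.1, rfl⟩, by rintro ⟨x, hx, rfl⟩; omega⟩
  rw [hIcc, powersetCard_map, sum_map]
  simp only [RelEmbedding.coe_toEmbedding, mapEmbedding_apply, prod_map, Fin.valEmbedding_apply]
  rw [← sum_strictAnti_eq_sum_powersetCard]
  simp only [mem_filter_univ]
  -- `<` on `Fin n` is `<` on the values, so the two `StrictAnti` conditions agree definitionally.
  rfl

theorem one_sub_pow_div_qint {q : ℂ} {m : ℕ} (hqm : q ^ m ≠ 1) :
    (1 - q ^ m) / qint q m = 1 - q := by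
  rw [qint, div_div_cancel₀ (sub_ne_zero.2 hqm.symm)]

theorem C_one_sub_pow_mul_one_add_C_div_qint {ζ : ℂ} {m : ℕ} (hζm : ζ ^ m ≠ 1) :
    C (1 - ζ ^ m) * (1 + C (ζ ^ m / qint ζ m) * X) = 1 - C (ζ ^ m) * (1 - C (1 - ζ) * X) := by
  have h : (1 - ζ ^ m) * (ζ ^ m / qint ζ m) = ζ ^ m * (1 - ζ) := by
    rw [mul_div_left_comm, one_sub_pow_div_qint hζm]
  rw [mul_add, mul_one, ← mul_assoc, ← C_mul, h, C_mul, map_sub, map_one]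
  ring

theorem C_mul_X_mul_prod_one_add_C_div_qint {ζ : ℂ} {n : ℕ} (hζ : IsPrimitiveRoot ζ n)
    (hn : 0 < n) :
    C (n * (1 - ζ)) * X * ∏ m ∈ Icc 1 (n - 1), (1 + C (ζ ^ m / qint ζ m) * X) =
      1 - (1 - C (1 - ζ) * X) ^ n := by
  set u : ℂ[X] := 1 - C (1 - ζ) * X
  have hIcc : Icc 1 (n - 1) = Ico 1 n := by ext; simp only [mem_Icc, mem_Ico]; omega
  have hfactor (m : ℕ) (hm : m ∈ Ico 1 n) :
      C (1 - ζ ^ m) * (1 + C (ζ ^ m / qint ζ m) * X) = 1 - C ζ ^ m * u := by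
    rw [← map_pow, C_one_sub_pow_mul_one_add_C_div_qint]
    rw [mem_Ico] at hm
    exact hζ.pow_ne_one_of_pos_of_lt (by omega) hm.2
  calc C (n * (1 - ζ)) * X * ∏ m ∈ Icc 1 (n - 1), (1 + C (ζ ^ m / qint ζ m) * X)
      = (1 - C ζ ^ 0 * u) * ∏ m ∈ Ico 1 n, C (1 - ζ ^ m) * (1 + C (ζ ^ m / qint ζ m) * X) := by
        rw [hIcc, prod_mul_distrib, ← map_prod, hζ.prod_Ico_one_sub_pow hn, C_mul, map_natCast]
        ring
    _ = ∏ m ∈ range n, (1 - C ζ ^ m * u) := by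
        rw [prod_congr rfl hfactor, prod_range_eq_mul_Ico _ hn]
    _ = 1 - u ^ n := (hζ.map_of_injective C_injective).prod_one_sub_pow_mul hn u

theorem sum_powersetCard_Icc_prod_pow_div_qint {ζ : ℂ} {n : ℕ} (hζ : IsPrimitiveRoot ζ n)
    (hn : 0 < n) {r : ℕ} (hr : r ≤ n - 1) :
    ∑ t ∈ (Icc 1 (n - 1)).powersetCard r, ∏ m ∈ t, ζ ^ m / qint ζ m =
      (-1) ^ r / n * n.choose (r + 1) * (1 - ζ) ^ r := by
  rcases (Nat.one_le_iff_ne_zero.2 hn.ne').eq_or_lt with rfl | hn1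
  · obtain rfl : r = 0 := by omega
    simp
  have hζ1 : 1 - ζ ≠ 0 := sub_ne_zero.2 (hζ.ne_one hn1).symm
  have hcoeff := congrArg (coeff · (r + 1)) (C_mul_X_mul_prod_one_add_C_div_qint hζ hn)
  simp only [mul_assoc, coeff_C_mul, coeff_X_mul, coeff_sub, coeff_one,
    sub_eq_add_neg (1 : ℂ[X]) (C _ * X), ← neg_mul, ← C_neg, coeff_one_add_C_mul_X_pow,
    coeff_prod_one_add_C_mul_X, Nat.add_one_ne_zero, if_false] at hcoeff
  rw [neg_pow] at hcoeff
  rw [eq_comm, div_mul_eq_mul_div, div_mul_eq_mul_div, div_eq_iff (Nat.cast_ne_zero.2 hn.ne')]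
  refine mul_left_cancel₀ hζ1 ?_
  linear_combination -hcoeff

open Classical in
/-- For a primitive `n`-th root of unity `ζ_n` (`n ≥ 1`) and
`0 ≤ r ≤ n−1`:
`Σ_{n>m_1>⋯>m_r≥1} Π_j ζ_n^{m_j}/[m_j] = ((−1)^r/n)·binom(n, r+1)·(1−ζ_n)^r`;
equivalently, `n(1−ζ_n)T·Π_{m=1}^{n−1}(1 + (ζ_n^m/[m])T) = 1 − (1 − (1−ζ_n)T)^n`
as polynomials in `T`. -/
theorem zn_ones_generating_function (n : ℕ) (hn : 1 ≤ n)
    (ζ : ℂ) (hζ : IsPrimitiveRoot ζ n) :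
    (∀ r : ℕ, r ≤ n - 1 →
      (∑ f : Fin r → Fin n,
          if (StrictAnti fun i => ((f i : ℕ))) ∧ (∀ i, 0 < ((f i : ℕ))) then
            ∏ i : Fin r, ζ ^ ((f i : ℕ)) / qint ζ ((f i : ℕ))
          else 0)
        = (-1 : ℂ) ^ r / n * (n.choose (r + 1)) * (1 - ζ) ^ r) ∧
    (Polynomial.C ((n : ℂ) * (1 - ζ)) * Polynomial.X) *
        ∏ m ∈ Finset.Icc 1 (n - 1),
          (1 + Polynomial.C (ζ ^ m / qint ζ m) * Polynomial.X)
      = 1 - (1 - Polynomial.C (1 - ζ) * Polynomial.X) ^ n := by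
  refine ⟨fun r hr => ?_, C_mul_X_mul_prod_one_add_C_div_qint hζ hn⟩
  rw [sum_strictAnti_pos_eq_sum_powersetCard_Icc n r fun m => ζ ^ m / qint ζ m]
  exact sum_powersetCard_Icc_prod_pow_div_qint hζ hn hr

end
end
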